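/- Let α > 0 and let X be a Leray solution of the unforced inviscid DN model on [0, T]. If for every t ∈ [0, T] one has lim_{N→∞} ∫₀ᵗ 2^{αN} X_N(s)² X_{N+1}(s) ds = 0, then the energy is conserved: Σ_{n≥1} X_n(t)² = Σ_{n≥1} X_n(0)² for all t ∈ [0, T]. -/

import Mathlib

open Set Filter

/-!
Differentiating the partial energy `∑_{n<N} X_{n+1}²` along the DN system telescopes: every
transfer term `c_n X_n² X_{n+1}` enters once with each sign, the boundary term at `n = 0`
vanishes because `X_0 ≡ 0`, and only the outgoing flux `-2 c_N X_N² X_{N+1}` through the last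
shell survives. Integrating, the partial energy at time `t` differs from its value at `0` by
`-2 ∫₀ᵗ c_N X_N² X_{N+1}`; as `N → ∞` the left side tends to the change of the total energy
(which is finite for a Leray solution) and the right side tends to `0` by assumption.
-/

namespace DNModel

open Finset

noncomputable section

def partialEnergy (X : ℕ → ℝ → ℝ) (N : ℕ) (t : ℝ) : ℝ :=
  ∑ n ∈ range N, X (n + 1) t ^ 2

def flux (c : ℕ → ℝ) (X : ℕ → ℝ → ℝ) (N : ℕ) (t : ℝ) : ℝ :=
  c N * X N t ^ 2 * X (N + 1) t

end

variable {c : ℕ → ℝ} {X : ℕ → ℝ → ℝ}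

theorem tendsto_partialEnergy {t : ℝ} (h : Summable fun n => X (n + 1) t ^ 2) :
    Tendsto (fun N => partialEnergy X N t) atTop (nhds (∑' n, X (n + 1) t ^ 2)) :=
  h.hasSum.tendsto_sum_nat

theorem hasDerivWithinAt_partialEnergy {s : Set ℝ} {t : ℝ} (hX0 : X 0 t = 0)
    (hX : ∀ n : ℕ, HasDerivWithinAt (X (n + 1))
      (c n * X n t ^ 2 - c (n + 1) * X (n + 1) t * X (n + 2) t) s t) (N : ℕ) :
    HasDerivWithinAt (partialEnergy X N) (-2 * flux c X N t) s t := by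
  have hterm : ∀ n : ℕ, HasDerivWithinAt (fun t => X (n + 1) t ^ 2)
      (2 * flux c X n t - 2 * flux c X (n + 1) t) s t := fun n =>
    ((hX n).pow 2).congr_deriv (by simp only [flux]; push_cast; ring)
  have htelescope : ∑ n ∈ range N, (2 * flux c X n t - 2 * flux c X (n + 1) t)
      = -2 * flux c X N t := by
    rw [sum_range_sub' (fun n => 2 * flux c X n t)]
    simp [flux, hX0]
  rw [← htelescope]
  exact HasDerivWithinAt.fun_sum fun n _ => hterm n

section Interval

variable {a b : ℝ} (hX0 : ∀ t, X 0 t = 0)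
  (hX : ∀ n : ℕ, ∀ t ∈ Icc a b, HasDerivWithinAt (X (n + 1))
    (c n * X n t ^ 2 - c (n + 1) * X (n + 1) t * X (n + 2) t) (Icc a b) t)

include hX0 hX

theorem continuousOn_of_hasDerivWithinAt (n : ℕ) : ContinuousOn (X n) (Icc a b) := by
  cases n with
  | zero => exact continuousOn_const.congr fun t _ => hX0 t
  | succ n => exact fun t ht => (hX n t ht).continuousWithinAt

theorem partialEnergy_sub_eq_integral_flux (hab : a ≤ b) (N : ℕ) :
    partialEnergy X N b - partialEnergy X N a = -2 * ∫ s in a..b, flux c X N s := by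
  have hcont := continuousOn_of_hasDerivWithinAt hX0 hX
  have hflux : ContinuousOn (fun s => -2 * flux c X N s) (Icc a b) :=
    continuousOn_const.mul
      ((continuousOn_const.mul ((hcont N).pow 2)).mul (hcont (N + 1)))
  rw [← intervalIntegral.integral_const_mul]
  refine (intervalIntegral.integral_eq_sub_of_hasDeriv_right_of_le hab
    (continuousOn_finsetSum _ fun n _ => (hcont (n + 1)).pow 2) (fun t ht => ?_)
    (hflux.intervalIntegrable_of_Icc hab)).symm
  have hderiv := hasDerivWithinAt_partialEnergy (hX0 t)
    (fun n => hX n t (Ioo_subset_Icc_self ht)) N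
  exact (hderiv.hasDerivAt (Icc_mem_nhds ht.1 ht.2)).hasDerivWithinAt

end Interval

end DNModel

namespace Stmt14

open DNModel

theorem energy_conservation_general (α T : ℝ) (hT : 0 ≤ T)
    (X : ℕ → ℝ → ℝ) (hX0 : ∀ t, X 0 t = 0)
    (hX : ∀ n : ℕ, 1 ≤ n → ∀ t ∈ Icc (0 : ℝ) T,
      HasDerivWithinAt (X n)
        ((2 : ℝ) ^ (α * ((n : ℝ) - 1)) * (X (n - 1) t) ^ 2
          - (2 : ℝ) ^ (α * (n : ℝ)) * X n t * X (n + 1) t) (Icc 0 T) t)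
    (hLeray : ∃ M : ℝ, ∀ t ∈ Icc (0 : ℝ) T,
      (Summable fun n => (X (n + 1) t) ^ 2) ∧ (∑' n, (X (n + 1) t) ^ 2) ≤ M)
    (hflux : ∀ t ∈ Icc (0 : ℝ) T,
      Tendsto (fun N : ℕ => ∫ s in (0 : ℝ)..t, (2 : ℝ) ^ (α * (N : ℝ)) * (X N s) ^ 2 * X (N + 1) s)
        atTop (nhds 0)) :
    ∀ t ∈ Icc (0 : ℝ) T, ∑' n, (X (n + 1) t) ^ 2 = ∑' n, (X (n + 1) 0) ^ 2 := by
  intro t ht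
  obtain ⟨_, hM⟩ := hLeray
  set c : ℕ → ℝ := fun n => (2 : ℝ) ^ (α * n)
  have hDN : ∀ n : ℕ, ∀ s ∈ Icc (0 : ℝ) t, HasDerivWithinAt (X (n + 1))
      (c n * X n s ^ 2 - c (n + 1) * X (n + 1) s * X (n + 2) s) (Icc 0 t) s := by
    intro n s hs
    have hsT : s ∈ Icc (0 : ℝ) T := ⟨hs.1, hs.2.trans ht.2⟩
    refine ((hX (n + 1) (by omega) s hsT).mono (Icc_subset_Icc_right ht.2)).congr_deriv ?_
    simp only [c, Nat.cast_add, Nat.cast_one, add_sub_cancel_right, Nat.add_sub_cancel]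
  have henergy : Tendsto (fun N => partialEnergy X N t - partialEnergy X N 0) atTop
      (nhds (∑' n, X (n + 1) t ^ 2 - ∑' n, X (n + 1) 0 ^ 2)) :=
    (tendsto_partialEnergy (hM t ht).1).sub (tendsto_partialEnergy (hM 0 ⟨le_rfl, hT⟩).1)
  have hvanish : Tendsto (fun N => partialEnergy X N t - partialEnergy X N 0) atTop (nhds 0) := by
    have h := (hflux t ht).const_mul (-2)
    rw [mul_zero] at h
    exact h.congr fun N => (partialEnergy_sub_eq_integral_flux hX0 hDN ht.1 N).symm
  exact sub_eq_zero.mp (tendsto_nhds_unique henergy hvanish)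

/-- Let `X` be a Leray solution of the unforced inviscid DN model
(with `c_n = 2^(αn)`, convention `X_0 ≡ 0`) on `[0, T]`. If for every `t ∈ [0, T]` the
flux `∫₀ᵗ 2^(αN) X_N(s)² X_{N+1}(s) ds` tends to `0` as `N → ∞`, then the energy is
conserved: `Σ_{n≥1} X_n(t)² = Σ_{n≥1} X_n(0)²` for all `t ∈ [0, T]`. -/
theorem energy_conservation (α T : ℝ) (hα : 0 < α) (hT : 0 ≤ T)
    (X : ℕ → ℝ → ℝ) (hX0 : ∀ t, X 0 t = 0)
    (hX : ∀ n : ℕ, 1 ≤ n → ∀ t ∈ Icc (0 : ℝ) T,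
      HasDerivWithinAt (X n)
        ((2 : ℝ) ^ (α * ((n : ℝ) - 1)) * (X (n - 1) t) ^ 2
          - (2 : ℝ) ^ (α * (n : ℝ)) * X n t * X (n + 1) t) (Icc 0 T) t)
    (hLeray : ∃ M : ℝ, ∀ t ∈ Icc (0 : ℝ) T,
      (Summable fun n => (X (n + 1) t) ^ 2) ∧ (∑' n, (X (n + 1) t) ^ 2) ≤ M)
    (hflux : ∀ t ∈ Icc (0 : ℝ) T,
      Tendsto (fun N : ℕ => ∫ s in (0 : ℝ)..t, (2 : ℝ) ^ (α * (N : ℝ)) * (X N s) ^ 2 * X (N + 1) s)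
        atTop (nhds 0)) :
    ∀ t ∈ Icc (0 : ℝ) T, ∑' n, (X (n + 1) t) ^ 2 = ∑' n, (X (n + 1) 0) ^ 2 :=
  energy_conservation_general α T hT X hX0 hX hLeray hflux

end Stmt14
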